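/- Let x⃗, y⃗ ∈ ℝ³, T a 3×3 real matrix, and suppose the region R⊥ = {ê ∈ ℝ³ : |ê|=1, y⃗ᵗê = 0, (Tᵗx⃗)ᵗê = 0} is nonempty. Then min over all unit n̂ of S(n̂) ≤ h₂((1+√(|x⃗|²+t₀²))/2), where t₀² = max{êᵗTᵗTê : ê ∈ R⊥} and S(n̂) is the two-qubit conditional entropy (assuming the constraints |x⃗ ± T n̂| ≤ 1 ∓ y⃗ᵗn̂ hold so all wᵢ are probabilities, and |x⃗|² + t₀² ≤ 1). -/

import Mathlib

noncomputable section
open Matrix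

def dot3 (u v : Fin 3 → ℝ) : ℝ := ∑ i, u i * v i
def norm3 (v : Fin 3 → ℝ) : ℝ := Real.sqrt (dot3 v v)

/-- Binary Shannon entropy (base 2). -/
def h2 (x : ℝ) : ℝ := -(x * Real.logb 2 x) - (1 - x) * Real.logb 2 (1 - x)

/-- Shannon entropy of four probabilities. -/
def h4 (a b c d : ℝ) : ℝ :=
  -(a * Real.logb 2 a) - b * Real.logb 2 b - c * Real.logb 2 c - d * Real.logb 2 d

/-- The conditional entropy `S(n̂) = h₄(w⃗) - h₂(p₀)`. -/
def condEnt (x y : Fin 3 → ℝ) (T : Matrix (Fin 3) (Fin 3) ℝ) (n : Fin 3 → ℝ) : ℝ :=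
  let p0 := (1 + dot3 y n) / 2
  let p1 := (1 - dot3 y n) / 2
  h4 ((2 * p0 + norm3 (x + T.mulVec n)) / 4) ((2 * p0 - norm3 (x + T.mulVec n)) / 4)
     ((2 * p1 + norm3 (x - T.mulVec n)) / 4) ((2 * p1 - norm3 (x - T.mulVec n)) / 4)
    - h2 p0

/-!
Let `e ∈ R⊥` attain `t₀²`. Since `y⃗ᵗe = 0` we have `p₀ = p₁ = 1/2`, and since `(Tᵗx⃗)ᵗe = 0`
Pythagoras gives `|x⃗ ± Te| = r := √(|x⃗|² + t₀²)`. So `w⃗ = (q, 1 - q, q, 1 - q)/2` with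
`q = (1 + r)/2`, which splits off a fair bit: `S(e) = h₂(q) + 1 - h₂(1/2) = h₂(q)`.
The infimum of `S` is bounded by `S(e)` because `S` is continuous on the compact unit sphere.
-/

@[fun_prop]
lemma Continuous.mul_logb {α : Type*} [TopologicalSpace α] {f : α → ℝ} (hf : Continuous f)
    (b : ℝ) : Continuous fun a ↦ f a * Real.logb b (f a) := by
  simp only [Real.logb, mul_div_assoc']
  exact (Real.continuous_mul_log.comp hf).div_const (Real.log b)

lemma half_mul_logb_half (a : ℝ) :
    a / 2 * Real.logb 2 (a / 2) = (a * Real.logb 2 a - a) / 2 := by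
  rcases eq_or_ne a 0 with rfl | ha
  · simp
  · rw [Real.logb_div ha two_ne_zero, Real.logb_self_eq_one one_lt_two]
    ring

lemma h2_half : h2 (1 / 2) = 1 := by
  rw [h2, show (1 : ℝ) - 1 / 2 = 1 / 2 by norm_num, half_mul_logb_half]
  norm_num

lemma h4_half_half (a : ℝ) : h4 (a / 2) ((1 - a) / 2) (a / 2) ((1 - a) / 2) = h2 a + 1 := by
  simp only [h4, h2, half_mul_logb_half]
  ring

lemma dot3_eq_dotProduct (u v : Fin 3 → ℝ) : dot3 u v = u ⬝ᵥ v := rfl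

lemma dot3_mulVec (T : Matrix (Fin 3) (Fin 3) ℝ) (u v : Fin 3 → ℝ) :
    dot3 u (T *ᵥ v) = dot3 (Tᵀ *ᵥ u) v := by
  simp only [dot3_eq_dotProduct, dotProduct_mulVec, vecMul_transpose, dotProduct_comm]

lemma dot3_transpose_mul_mulVec (T : Matrix (Fin 3) (Fin 3) ℝ) (v : Fin 3 → ℝ) :
    dot3 v ((Tᵀ * T) *ᵥ v) = dot3 (T *ᵥ v) (T *ᵥ v) := by
  rw [← mulVec_mulVec, dot3_mulVec, transpose_transpose]

lemma norm3_sq (u : Fin 3 → ℝ) : norm3 u ^ 2 = dot3 u u :=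
  Real.sq_sqrt (Finset.sum_nonneg fun i _ ↦ mul_self_nonneg (u i))

lemma norm3_add_eq_of_dot3_eq_zero {u v : Fin 3 → ℝ} (h : dot3 u v = 0) :
    norm3 (u + v) = Real.sqrt (norm3 u ^ 2 + dot3 v v) := by
  rw [norm3_sq, norm3]
  simp only [dot3_eq_dotProduct, add_dotProduct, dotProduct_add, dotProduct_comm v u] at h ⊢
  rw [h, add_zero, zero_add]

lemma norm3_sub_eq_of_dot3_eq_zero {u v : Fin 3 → ℝ} (h : dot3 u v = 0) :
    norm3 (u - v) = Real.sqrt (norm3 u ^ 2 + dot3 v v) := by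
  rw [norm3_sq, norm3]
  simp only [dot3_eq_dotProduct, sub_dotProduct, dotProduct_sub, dotProduct_comm v u] at h ⊢
  rw [h, sub_zero, zero_sub, sub_neg_eq_add]

lemma isCompact_setOf_dotProduct_self_eq_one {ι : Type*} [Fintype ι] :
    IsCompact {v : ι → ℝ | v ⬝ᵥ v = 1} := by
  refine Metric.isCompact_of_isClosed_isBounded
    (isClosed_eq (by fun_prop) continuous_const) ?_
  refine (Metric.isBounded_closedBall (x := 0) (r := 1)).subset fun v (hv : v ⬝ᵥ v = 1) ↦ ?_
  rw [mem_closedBall_zero_iff, pi_norm_le_iff_of_nonneg zero_le_one]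
  intro i
  have hi : v i * v i ≤ v ⬝ᵥ v :=
    Finset.single_le_sum (f := fun j ↦ v j * v j) (fun j _ ↦ mul_self_nonneg _) (Finset.mem_univ i)
  rw [Real.norm_eq_abs, ← sq_le_one_iff_abs_le_one]
  nlinarith

lemma continuous_condEnt (x y : Fin 3 → ℝ) (T : Matrix (Fin 3) (Fin 3) ℝ) :
    Continuous (condEnt x y T) := by
  unfold condEnt h4 h2 norm3 dot3
  fun_prop

lemma bddBelow_condEnt (x y : Fin 3 → ℝ) (T : Matrix (Fin 3) (Fin 3) ℝ) :
    BddBelow {s : ℝ | ∃ n : Fin 3 → ℝ, dot3 n n = 1 ∧ s = condEnt x y T n} :=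
  (isCompact_setOf_dotProduct_self_eq_one.bddBelow_image
      (continuous_condEnt x y T).continuousOn).mono
    (by rintro _ ⟨n, hn, rfl⟩; exact ⟨n, hn, rfl⟩)

lemma condEnt_eq_h2 {x y : Fin 3 → ℝ} {T : Matrix (Fin 3) (Fin 3) ℝ} {n : Fin 3 → ℝ} {r : ℝ}
    (hy : dot3 y n = 0) (hadd : norm3 (x + T *ᵥ n) = r) (hsub : norm3 (x - T *ᵥ n) = r) :
    condEnt x y T n = h2 ((1 + r) / 2) := by
  simp only [condEnt, hy, hadd, hsub]
  rw [show ((1 : ℝ) + 0) / 2 = 1 / 2 by norm_num, show ((1 : ℝ) - 0) / 2 = 1 / 2 by norm_num,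
    show (2 * (1 / 2 : ℝ) + r) / 4 = (1 + r) / 2 / 2 by ring,
    show (2 * (1 / 2 : ℝ) - r) / 4 = (1 - (1 + r) / 2) / 2 by ring,
    h4_half_half, h2_half, add_sub_cancel_right]

theorem condEnt_min_upper_bound_general
    (x y : Fin 3 → ℝ) (T : Matrix (Fin 3) (Fin 3) ℝ) (t0sq : ℝ)
    (ht0 : IsGreatest {r : ℝ | ∃ e : Fin 3 → ℝ, dot3 e e = 1 ∧ dot3 y e = 0 ∧
        dot3 (Tᵀ.mulVec x) e = 0 ∧ r = dot3 e ((Tᵀ * T).mulVec e)} t0sq) :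
    sInf {s : ℝ | ∃ n : Fin 3 → ℝ, dot3 n n = 1 ∧ s = condEnt x y T n}
      ≤ h2 ((1 + Real.sqrt (norm3 x ^ 2 + t0sq)) / 2) := by
  obtain ⟨⟨e, he, hye, hTxe, rfl⟩, -⟩ := ht0
  have hxe : dot3 x (T *ᵥ e) = 0 := by rwa [dot3_mulVec]
  rw [dot3_transpose_mul_mulVec]
  have hSe := condEnt_eq_h2 hye (norm3_add_eq_of_dot3_eq_zero hxe)
    (norm3_sub_eq_of_dot3_eq_zero hxe)
  exact csInf_le (bddBelow_condEnt x y T) ⟨e, he, hSe.symm⟩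

/-- Upper bound on the minimal conditional entropy:
`min_{n̂} S(n̂) ≤ h₂((1+√(|x⃗|²+t₀²))/2)` where `t₀² = max{êᵗTᵗTê : ê ∈ R⊥}` and
`R⊥` is the set of unit vectors orthogonal to both `y⃗` and `Tᵗx⃗`. -/
theorem condEnt_min_upper_bound
    (x y : Fin 3 → ℝ) (T : Matrix (Fin 3) (Fin 3) ℝ) (t0sq : ℝ)
    (ht0 : IsGreatest {r : ℝ | ∃ e : Fin 3 → ℝ, dot3 e e = 1 ∧ dot3 y e = 0 ∧
        dot3 (Tᵀ.mulVec x) e = 0 ∧ r = dot3 e ((Tᵀ * T).mulVec e)} t0sq)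
    (hw : ∀ n : Fin 3 → ℝ, dot3 n n = 1 →
        norm3 (x + T.mulVec n) ≤ 1 - dot3 y n ∧
        norm3 (x - T.mulVec n) ≤ 1 + dot3 y n)
    (hle : norm3 x ^ 2 + t0sq ≤ 1) :
    sInf {s : ℝ | ∃ n : Fin 3 → ℝ, dot3 n n = 1 ∧ s = condEnt x y T n}
      ≤ h2 ((1 + Real.sqrt (norm3 x ^ 2 + t0sq)) / 2) :=
  condEnt_min_upper_bound_general x y T t0sq ht0
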